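/- Let G be a finite simple graph with a proper coloring c, let k = ω(G), and let {u,v} be an edge of G. If the set of colors appearing on common neighbors of u and v has size less than k − 2, then the edge {u,v} is not contained in any maximum clique of G; hence deleting {u,v} preserves all maximum cliques. -/

import Mathlib

/-!
A proper colouring is injective on every clique. If `u` and `v` both lay in a clique `S` of
size `k`, then the `k - 2` (or more) vertices of `S \ {u, v}` would be common neighbours of `u`
and `v` with pairwise distinct colours, so at least `k - 2` colours would appear on the common
neighbours.
-/

namespace SimpleGraph

variable {V α : Type*} {G : SimpleGraph V}

lemma Coloring.injOn_of_isClique (c : G.Coloring α) {s : Set V} (hs : G.IsClique s) :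
    Set.InjOn c s :=
  fun _ hx _ hy hxy => by_contra fun hne => c.valid (hs hx hy hne) hxy

lemma Coloring.card_image_of_isClique [DecidableEq α] (c : G.Coloring α) {s : Finset V}
    (hs : G.IsClique (s : Set V)) : (s.image c).card = s.card :=
  Finset.card_image_of_injOn (c.injOn_of_isClique hs)

lemma IsClique.sdiff_pair_subset_commonNeighbors [Fintype V] [DecidableEq V] [DecidableRel G.Adj]
    {s : Finset V} (hs : G.IsClique (s : Set V)) {u v : V} (hu : u ∈ s) (hv : v ∈ s) :
    s \ {u, v} ⊆ G.neighborFinset u ∩ G.neighborFinset v := by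
  intro w hw
  obtain ⟨hws, hwuv⟩ := Finset.mem_sdiff.1 hw
  simp only [Finset.mem_insert, Finset.mem_singleton, not_or] at hwuv
  simp only [Finset.mem_inter, mem_neighborFinset]
  exact ⟨hs hu hws (Ne.symm hwuv.1), hs hv hws (Ne.symm hwuv.2)⟩

lemma IsNClique.notMem_or_notMem_of_card_image_commonNeighbors_lt [Fintype V] [DecidableEq V]
    [DecidableRel G.Adj] [DecidableEq α] (c : G.Coloring α) {k : ℕ} {S : Finset V}
    (hS : G.IsNClique k S) {u v : V}
    (hcol : ((G.neighborFinset u ∩ G.neighborFinset v).image c).card < k - 2) :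
    u ∉ S ∨ v ∉ S := by
  by_contra! h
  obtain ⟨hu, hv⟩ := h
  have hrest : k - 2 ≤ ((S \ {u, v}).image c).card := by
    rw [c.card_image_of_isClique (hS.isClique.subset (by simp))]
    calc k - 2 ≤ S.card - ({u, v} : Finset V).card := by
          rw [hS.card_eq]; exact Nat.sub_le_sub_left Finset.card_le_two k
      _ ≤ (S \ {u, v}).card := Finset.le_card_sdiff _ _
  have hsub := Finset.card_le_card <|
    Finset.image_subset_image (f := c) (hS.isClique.sdiff_pair_subset_commonNeighbors hu hv)
  omega

lemma IsNClique.deleteEdges_of_notMem_or_notMem {k : ℕ} {S : Finset V} (hS : G.IsNClique k S)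
    {u v : V} (h : u ∉ S ∨ v ∉ S) : (G.deleteEdges {s(u, v)}).IsNClique k S := by
  refine ⟨fun a ha b hb hab => (deleteEdges_adj ..).2 ⟨hS.isClique ha hb hab, ?_⟩, hS.card_eq⟩
  rw [Set.mem_singleton_iff, Sym2.eq_iff]
  rintro (⟨rfl, rfl⟩ | ⟨rfl, rfl⟩) <;> simp_all

end SimpleGraph

theorem edge_color_rule_general {V : Type*} [Fintype V] [DecidableEq V] {α : Type*}
    [DecidableEq α] (G : SimpleGraph V) [DecidableRel G.Adj]
    (c : G.Coloring α) {k : ℕ} {u v : V}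
    (hcol : (((G.neighborFinset u ∩ G.neighborFinset v)).image c).card < k - 2) :
    ∀ S : Finset V, G.IsNClique k S →
      (u ∉ S ∨ v ∉ S) ∧ (G.deleteEdges {s(u, v)}).IsNClique k S := by
  intro S hS
  have huv := hS.notMem_or_notMem_of_card_image_commonNeighbors_lt c hcol
  exact ⟨huv, hS.deleteEdges_of_notMem_or_notMem huv⟩

/-- Let `G` be a finite simple graph with a proper coloring `c`, let
`k = ω(G)`, and let `{u,v}` be an edge of `G`. If the set of colors appearing
on the common neighbors of `u` and `v` has size less than `k - 2`, then the
edge `{u,v}` is not contained in any maximum clique of `G`; hence deleting the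
edge `{u,v}` preserves all maximum cliques. -/
theorem edge_color_rule {V : Type*} [Fintype V] [DecidableEq V] {α : Type*}
    [DecidableEq α] (G : SimpleGraph V) [DecidableRel G.Adj]
    (c : G.Coloring α) {k : ℕ} (hk : G.cliqueNum = k) {u v : V}
    (huv : G.Adj u v)
    (hcol : (((G.neighborFinset u ∩ G.neighborFinset v)).image c).card < k - 2) :
    ∀ S : Finset V, G.IsNClique k S →
      (u ∉ S ∨ v ∉ S) ∧ (G.deleteEdges {s(u, v)}).IsNClique k S :=
  edge_color_rule_general G c hcol
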